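/- There exists a universal constant c > 0 such that for every constant δ ∈ (0,1/2) and all sufficiently large even n the following holds. Fix an injective map ι : {0,1}^{n/2−1} → GF(2^{n/2}) \ {0} and a fixed F_2-linear identification of GF(2^{n/2}) with F_2^{n/2}, and define Enc : {0,1}^{n/2−1} → F_2^n by Enc(y) = (ι(y), ι(y)³). Then the function nmExt : {0,1}^n × {0,1}^{n/2−1} → {0,1} defined by nmExt(x,y) = ⟨x, Enc(y)⟩ (inner product over F_2) is a ((1/2+δ)n, 2^{−cδn})-non-malleable extractor. -/

import Mathlib

open Finset
open scoped Classical

noncomputable section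

abbrev BS (n : ℕ) := Fin n → Bool

def uniformD (α : Type*) [Fintype α] : α → ℝ := fun _ => (Fintype.card α : ℝ)⁻¹

def prodD {α β : Type*} (p : α → ℝ) (q : β → ℝ) : α × β → ℝ := fun z => p z.1 * q z.2

def pushD {α β : Type*} [Fintype α] (f : α → β) (p : α → ℝ) : β → ℝ :=
  fun b => ∑ a, if f a = b then p a else 0

def SD {α : Type*} [Fintype α] (p q : α → ℝ) : ℝ := (∑ a, |p a - q a|) / 2

def IsDist {α : Type*} [Fintype α] (p : α → ℝ) : Prop := (∀ a, 0 ≤ p a) ∧ ∑ a, p a = 1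

def mEntGe {α : Type*} (p : α → ℝ) (k : ℝ) : Prop := ∀ a, p a ≤ (2:ℝ) ^ (-k)

def IsNME {X Y M : Type*} [Fintype X] [Fintype Y] [Fintype M]
    (E : X → Y → M) (k ε : ℝ) : Prop :=
  ∀ μX : X → ℝ, IsDist μX → mEntGe μX k →
    ∀ A : Y → Y, (∀ y, A y ≠ y) →
      SD (pushD (fun xy : X × Y => (E xy.1 xy.2, E xy.1 (A xy.2), xy.2)) (prodD μX (uniformD Y)))
         (prodD (uniformD M)
           (pushD (fun xy : X × Y => (E xy.1 (A xy.2), xy.2)) (prodD μX (uniformD Y)))) ≤ ε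

def IsNMEr {X Y M : Type*} [Fintype X] [Fintype Y] [Fintype M]
    (r : ℕ) (E : X → Y → M) (k ε : ℝ) : Prop :=
  ∀ μX : X → ℝ, IsDist μX → mEntGe μX k →
    ∀ A : Fin r → Y → Y, (∀ i y, A i y ≠ y) →
      SD (pushD (fun xy : X × Y =>
            (E xy.1 xy.2, fun i => E xy.1 (A i xy.2), xy.2)) (prodD μX (uniformD Y)))
         (prodD (uniformD M)
           (pushD (fun xy : X × Y =>
             ((fun i => E xy.1 (A i xy.2)), xy.2)) (prodD μX (uniformD Y)))) ≤ ε

/-- The inner product over `F_2` of two vectors in `F_2^h × F_2^h ≅ F_2^{2h}`. -/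
def ipPair {h : ℕ} (v w : (Fin h → ZMod 2) × (Fin h → ZMod 2)) : ZMod 2 :=
  (∑ i, v.1 i * w.1 i) + (∑ i, v.2 i * w.2 i)

/-! For a fixed seed `y`, with `v = Enc y` and `w = Enc (A y)`, the bit `⟨x, v⟩` is uniform given
`⟨x, w⟩` up to the biases of the two parities `⟨x, v⟩` and `⟨x, v + w⟩` of the source. By Parseval,
the squared biases of a source of min-entropy `k` on `F_2^n` sum to at most `2^(n - k)`, so their
average over the seeds is small as soon as `y ↦ Enc y` and `y ↦ Enc y + Enc (A y)` are at most
two-to-one. For `Enc u = (u, u³)` this holds because in characteristic `2` the values of `u + v`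
and `u³ + v³ = (u + v)³ + uv (u + v)` determine the pair `{u, v}`. -/

lemma zmod_two_eq_zero_or_one (a : ZMod 2) : a = 0 ∨ a = 1 := by
  decide +revert

lemma sum_zmod_two {M : Type*} [AddCommMonoid M] (f : ZMod 2 → M) : ∑ a, f a = f 0 + f 1 :=
  Fin.sum_univ_two f

def signChar : AddChar (ZMod 2) ℝ :=
  AddChar.zmodChar 2 (by norm_num : (-1 : ℝ) ^ 2 = 1)

lemma signChar_one : signChar 1 = -1 := by
  simp [signChar, AddChar.zmodChar_apply, ZMod.val_one]

lemma signChar_sub (a b : ZMod 2) : signChar (a - b) = signChar a * signChar b := by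
  rw [CharTwo.sub_eq_add, AddChar.map_add_eq_mul]

lemma abs_add_abs_le_abs_add_add_abs_sub (a b : ℝ) : |a| + |b| ≤ |a + b| + |a - b| := by
  rcases abs_cases a with ⟨ha, -⟩ | ⟨ha, -⟩ <;> rcases abs_cases b with ⟨hb, -⟩ | ⟨hb, -⟩ <;>
    rw [ha, hb] <;>
    linarith [le_abs_self (a + b), neg_abs_le (a + b), le_abs_self (a - b), neg_abs_le (a - b)]

lemma sum_abs_sum_ite_le {Ω : Type*} [Fintype Ω] (c : Ω → ZMod 2) (g : Ω → ℝ) :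
    ∑ b, |∑ ω, if c ω = b then g ω else 0| ≤ |∑ ω, g ω| + |∑ ω, g ω * signChar (c ω)| := by
  have hsplit : ∀ ω, g ω = (if c ω = 0 then g ω else 0) + if c ω = 1 then g ω else 0 := by
    intro ω; rcases zmod_two_eq_zero_or_one (c ω) with h | h <;> simp [h]
  have hsign : ∀ ω,
      g ω * signChar (c ω) = (if c ω = 0 then g ω else 0) - if c ω = 1 then g ω else 0 := by
    intro ω; rcases zmod_two_eq_zero_or_one (c ω) with h | h <;> simp [h, signChar_one]
  simp only [sum_zmod_two, hsign, Finset.sum_sub_distrib]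
  conv_rhs => enter [1, 1, 2, ω]; rw [hsplit ω]
  rw [Finset.sum_add_distrib]
  exact abs_add_abs_le_abs_add_add_abs_sub _ _

lemma pushD_snd_apply {Ω Z : Type*} [Fintype Ω] (f : Ω → ZMod 2 × Z) (D : Ω → ℝ) (z : Z) :
    pushD (fun ω => (f ω).2) D z = pushD f D (0, z) + pushD f D (1, z) := by
  simp only [pushD, ← Finset.sum_add_distrib]
  have key : ∀ (p : ZMod 2 × Z) (r : ℝ),
      (if p.2 = z then r else 0) = (if p = (0, z) then r else 0) + if p = (1, z) then r else 0 := by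
    rintro ⟨a, z'⟩ r
    rcases zmod_two_eq_zero_or_one a with rfl | rfl <;> by_cases hz : z' = z <;> simp [hz]
  exact Finset.sum_congr rfl fun ω _ => by convert key (f ω) (D ω)

lemma SD_prodD_uniformD_zmod_two {Ω Z : Type*} [Fintype Ω] [Fintype Z]
    (f : Ω → ZMod 2 × Z) (D : Ω → ℝ) :
    SD (pushD f D) (prodD (uniformD (ZMod 2)) (pushD (fun ω => (f ω).2) D)) =
      (∑ z, |pushD f D (0, z) - pushD f D (1, z)|) / 2 := by
  have hu : uniformD (ZMod 2) = fun _ => 1 / 2 := by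
    ext; simp [uniformD]
  simp only [SD, prodD, hu, pushD_snd_apply, Fintype.sum_prod_type, sum_zmod_two]
  rw [← Finset.sum_add_distrib]
  congr 1
  refine Finset.sum_congr rfl fun z _ => ?_
  rw [show ∀ p q : ℝ, p - 1 / 2 * (p + q) = (p - q) / 2 by intros; ring,
    show ∀ p q : ℝ, q - 1 / 2 * (p + q) = -((p - q) / 2) by intros; ring, abs_neg, abs_div,
    abs_two]
  ring

lemma pushD_seeded_pair_apply {X Y β γ : Type*} [Fintype X] [Fintype Y]
    [DecidableEq β] [DecidableEq γ] (f : X × Y → β) (g : X × Y → γ) (μ : X → ℝ) (b : β) (c : γ)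
    (y : Y) :
    pushD (fun xy => (f xy, g xy, xy.2)) (prodD μ (uniformD Y)) (b, c, y) =
      (Fintype.card Y : ℝ)⁻¹ * ∑ x, if f (x, y) = b ∧ g (x, y) = c then μ x else 0 := by
  simp only [pushD, prodD, uniformD, Fintype.sum_prod_type, Prod.mk.injEq]
  rw [Finset.sum_comm, Finset.sum_eq_single y, Finset.mul_sum]
  · exact Finset.sum_congr rfl fun x _ => by split_ifs <;> simp_all [mul_comm]
  · intro y' _ hy'
    exact Finset.sum_eq_zero fun x _ => by simp [hy']
  · simp

section Fourier

variable {V : Type*} [AddCommGroup V] [Fintype V] (B : V →+ V →+ ZMod 2)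

def bias (μ : V → ℝ) (v : V) : ℝ := ∑ x, μ x * signChar (B x v)

lemma sum_signChar_pairing (hB : ∀ z ≠ 0, ∃ v, B z v ≠ 0) (z : V) :
    ∑ v, signChar (B z v) = if z = 0 then (Fintype.card V : ℝ) else 0 := by
  split_ifs with hz
  · simp [hz]
  · obtain ⟨v, hv⟩ := hB z hz
    refine AddChar.sum_eq_zero_of_ne_one (ψ := signChar.compAddMonoidHom (B z)) ?_
    refine AddChar.ne_one_iff.2 ⟨v, ?_⟩
    rw [AddChar.compAddMonoidHom_apply, (zmod_two_eq_zero_or_one _).resolve_left hv, signChar_one]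
    norm_num

lemma sum_bias_sq (hB : ∀ z ≠ 0, ∃ v, B z v ≠ 0) (μ : V → ℝ) :
    ∑ v, bias B μ v ^ 2 = Fintype.card V * ∑ x, μ x ^ 2 := by
  calc ∑ v, bias B μ v ^ 2 = ∑ x, ∑ x', μ x * μ x' * ∑ v, signChar (B (x - x') v) := by
        simp_rw [bias, sq, Finset.sum_mul_sum, Finset.mul_sum, map_sub, AddMonoidHom.sub_apply,
          signChar_sub]
        rw [Finset.sum_comm]
        refine Finset.sum_congr rfl fun x _ => ?_
        rw [Finset.sum_comm]
        refine Finset.sum_congr rfl fun x' _ => Finset.sum_congr rfl fun v _ => ?_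
        ring
    _ = Fintype.card V * ∑ x, μ x ^ 2 := by
        simp only [sum_signChar_pairing B hB, sub_eq_zero, mul_ite, mul_zero, Finset.sum_ite_eq,
          Finset.mem_univ, if_true, Finset.mul_sum]
        exact Finset.sum_congr rfl fun x _ => by ring

lemma sum_abs_sub_le_abs_bias_add_abs_bias (μ : V → ℝ) (v w : V) :
    ∑ b, |(∑ x, if B x v = 0 ∧ B x w = b then μ x else 0) -
        ∑ x, if B x v = 1 ∧ B x w = b then μ x else 0| ≤
      |bias B μ v| + |bias B μ (v + w)| := by
  have hdiff : ∀ b, ((∑ x, if B x v = 0 ∧ B x w = b then μ x else 0) -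
      ∑ x, if B x v = 1 ∧ B x w = b then μ x else 0) =
      ∑ x, if B x w = b then μ x * signChar (B x v) else 0 := by
    intro b
    rw [← Finset.sum_sub_distrib]
    refine Finset.sum_congr rfl fun x _ => ?_
    rcases zmod_two_eq_zero_or_one (B x v) with h | h <;> split_ifs <;> simp_all [signChar_one]
  have hbias : bias B μ (v + w) = ∑ x, μ x * signChar (B x v) * signChar (B x w) := by
    simp only [bias, map_add, AddChar.map_add_eq_mul, mul_assoc]
  simp only [hdiff, hbias]
  exact sum_abs_sum_ite_le (fun x => B x w) (fun x => μ x * signChar (B x v))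

lemma SD_le_bias {Y : Type*} [Fintype Y] (Enc : Y → V) (A : Y → Y) (μ : V → ℝ) :
    SD (pushD (fun xy : V × Y => (B xy.1 (Enc xy.2), B xy.1 (Enc (A xy.2)), xy.2))
          (prodD μ (uniformD Y)))
       (prodD (uniformD (ZMod 2))
          (pushD (fun xy : V × Y => (B xy.1 (Enc (A xy.2)), xy.2)) (prodD μ (uniformD Y)))) ≤
      (Fintype.card Y : ℝ)⁻¹ *
        ∑ y, (|bias B μ (Enc y)| + |bias B μ (Enc y + Enc (A y))|) / 2 := by
  rw [SD_prodD_uniformD_zmod_two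
    (fun xy : V × Y => (B xy.1 (Enc xy.2), B xy.1 (Enc (A xy.2)), xy.2))]
  simp only [Fintype.sum_prod_type, pushD_seeded_pair_apply, ← mul_sub, abs_mul, abs_inv,
    Nat.abs_cast, ← Finset.mul_sum]
  rw [Finset.sum_comm, mul_div_assoc, Finset.sum_div]
  gcongr with y
  exact sum_abs_sub_le_abs_bias_add_abs_bias B μ (Enc y) (Enc (A y))

end Fourier

lemma sum_sq_le_of_mEntGe {α : Type*} [Fintype α] {μ : α → ℝ} {k : ℝ} (hμ : IsDist μ)
    (hk : mEntGe μ k) : ∑ x, μ x ^ 2 ≤ 2 ^ (-k) :=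
  calc ∑ x, μ x ^ 2 ≤ ∑ x, 2 ^ (-k) * μ x :=
        Finset.sum_le_sum fun x _ => by rw [sq]; exact mul_le_mul_of_nonneg_right (hk x) (hμ.1 x)
    _ = 2 ^ (-k) := by rw [← Finset.mul_sum, hμ.2, mul_one]

lemma sum_comp_le_of_card_fiber_le {Y W : Type*} [Fintype Y] [Fintype W] [DecidableEq W] {g : W → ℝ}
    (hg : ∀ w, 0 ≤ g w) (Φ : Y → W) {m : ℕ} (hΦ : ∀ w, #{y | Φ y = w} ≤ m) :
    ∑ y, g (Φ y) ≤ m * ∑ w, g w := by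
  rw [← Finset.sum_fiberwise univ Φ, Finset.mul_sum]
  refine Finset.sum_le_sum fun w _ => ?_
  rw [Finset.sum_congr rfl fun y hy => congrArg g (Finset.mem_filter.1 hy).2, Finset.sum_const,
    nsmul_eq_mul]
  exact mul_le_mul_of_nonneg_right (by exact_mod_cast hΦ w) (hg w)

lemma sum_abs_le_of_sum_sq_le {Y : Type*} [Fintype Y] (a : Y → ℝ) {M t : ℝ} (ht : 0 < t)
    (hM : ∑ y, a y ^ 2 ≤ M) : ∑ y, |a y| ≤ Fintype.card Y * t / 2 + M / (2 * t) := by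
  have amgm : ∀ y, |a y| ≤ t / 2 + a y ^ 2 / (2 * t) := fun y => by
    rw [← sq_abs, div_add_div _ _ two_ne_zero (by positivity), le_div_iff₀ (by positivity)]
    nlinarith [sq_nonneg (|a y| - t)]
  calc ∑ y, |a y| ≤ ∑ y, (t / 2 + a y ^ 2 / (2 * t)) := Finset.sum_le_sum fun y _ => amgm y
    _ ≤ Fintype.card Y * t / 2 + M / (2 * t) := by
      rw [Finset.sum_add_distrib, Finset.sum_const, Finset.card_univ, nsmul_eq_mul,
        ← Finset.sum_div, mul_div_assoc]
      gcongr

lemma IsNME.mono {X Y M : Type*} [Fintype X] [Fintype Y] [Fintype M] {E : X → Y → M}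
    {k ε ε' : ℝ} (hE : IsNME E k ε) (hε : ε ≤ ε') : IsNME E k ε' :=
  fun μ hμ hk A hA => (hE μ hμ hk A hA).trans hε

theorem isNME_pairing_of_card_fiber_le_two {V Y : Type*} [AddCommGroup V] [Fintype V]
    [DecidableEq V] [Fintype Y] [Nonempty Y] {B : V →+ V →+ ZMod 2} (hB : ∀ z ≠ 0, ∃ v, B z v ≠ 0)
    {Enc : Y → V} (hEnc : Function.Injective Enc)
    (hfib : ∀ A : Y → Y, (∀ y, A y ≠ y) → ∀ v, #{y | Enc y + Enc (A y) = v} ≤ 2)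
    (k : ℝ) {t : ℝ} (ht : 0 < t) :
    IsNME (fun x y => B x (Enc y)) k
      (t / 2 + Fintype.card V * 2 ^ (-k) / (Fintype.card Y * t)) := by
  intro μ hμ hk A hA
  set C : ℝ := Fintype.card V * 2 ^ (-k)
  have hC : ∑ v, bias B μ v ^ 2 ≤ C := by
    rw [sum_bias_sq B hB]
    exact mul_le_mul_of_nonneg_left (sum_sq_le_of_mEntGe hμ hk) (Nat.cast_nonneg _)
  have hC0 : 0 ≤ C := by positivity
  have hinj : ∀ v, #{y | Enc y = v} ≤ 2 := fun v =>
    (Finset.card_le_one.2 fun a ha b hb =>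
      hEnc ((Finset.mem_filter.1 ha).2.trans (Finset.mem_filter.1 hb).2.symm)).trans one_le_two
  have hsum : ∀ Φ : Y → V, (∀ v, #{y | Φ y = v} ≤ 2) →
      ∑ y, |bias B μ (Φ y)| ≤ Fintype.card Y * t / 2 + 2 * C / (2 * t) := fun Φ hΦ =>
    sum_abs_le_of_sum_sq_le _ ht <| (sum_comp_le_of_card_fiber_le (fun _ => sq_nonneg _) Φ hΦ).trans
      (by push_cast; linarith)
  have hY : (0 : ℝ) < Fintype.card Y := by exact_mod_cast Fintype.card_pos
  calc _ ≤ (Fintype.card Y : ℝ)⁻¹ *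
        ∑ y, (|bias B μ (Enc y)| + |bias B μ (Enc y + Enc (A y))|) / 2 := SD_le_bias B Enc A μ
    _ ≤ (Fintype.card Y : ℝ)⁻¹ * (Fintype.card Y * t / 2 + 2 * C / (2 * t)) := by
      rw [← Finset.sum_div, Finset.sum_add_distrib]
      gcongr
      linarith [hsum Enc hinj, hsum (fun y => Enc y + Enc (A y)) (hfib A hA)]
    _ = t / 2 + C / (Fintype.card Y * t) := by
      field_simp

lemma eq_or_eq_of_add_eq_of_pow_three_add_eq {K : Type*} [CommRing K] [IsDomain K] [CharP K 2]
    {u₁ v₁ u₂ v₂ : K} (hne : u₁ ≠ v₁) (hs : u₁ + v₁ = u₂ + v₂)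
    (hc : u₁ ^ 3 + v₁ ^ 3 = u₂ ^ 3 + v₂ ^ 3) : u₂ = u₁ ∨ u₂ = v₁ := by
  obtain rfl : v₂ = u₁ + v₁ - u₂ := by linear_combination -hs
  -- `u₁³ + v₁³ - u₂³ - (u₁ + v₁ - u₂)³ = -3 (u₁ + v₁) (u₂ - u₁) (u₂ - v₁)` in any commutative ring
  have hprod : (u₁ + v₁) * ((u₂ - u₁) * (u₂ - v₁)) = 0 := by
    linear_combination hc + 2 * (u₁ + v₁) * ((u₂ - u₁) * (u₂ - v₁)) * CharTwo.two_eq_zero (R := K)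
  simpa [CharTwo.add_eq_zero, hne, sub_eq_zero] using hprod

def cubeEnc {K W : Type*} [Semiring K] [AddCommMonoid W] (e : K →+ W) (u : K) : W × W :=
  (e u, e (u ^ 3))

lemma cubeEnc_add_cubeEnc {K W : Type*} [Semiring K] [AddCommMonoid W] (e : K →+ W) (u v : K) :
    cubeEnc e u + cubeEnc e v = (e (u + v), e (u ^ 3 + v ^ 3)) := by
  simp [cubeEnc, map_add]

lemma card_filter_cubeEnc_add_le_two {K W Y : Type*} [CommRing K] [IsDomain K] [CharP K 2]
    [AddCommMonoid W] [DecidableEq W] [Fintype Y] {e : K →+ W} (he : Function.Injective e)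
    {u : Y → K} (hu : Function.Injective u) {A : Y → Y} (hA : ∀ y, A y ≠ y) (v : W × W) :
    #{y | cubeEnc e (u y) + cubeEnc e (u (A y)) = v} ≤ 2 := by
  have hmem : ∀ y ∈ ({y | cubeEnc e (u y) + cubeEnc e (u (A y)) = v} : Finset Y),
      ∀ y' ∈ ({y | cubeEnc e (u y) + cubeEnc e (u (A y)) = v} : Finset Y), y' = y ∨ y' = A y := by
    intro y hy y' hy'
    have heq := (Finset.mem_filter.1 hy).2.trans (Finset.mem_filter.1 hy').2.symm
    simp only [cubeEnc_add_cubeEnc, Prod.ext_iff, he.eq_iff] at heq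
    exact (eq_or_eq_of_add_eq_of_pow_three_add_eq (hu.ne (hA y).symm) heq.1 heq.2).imp
      (fun h => hu h) (fun h => hu h)
  by_contra! h3
  obtain ⟨y₁, h₁, y₂, h₂, y₃, h₃, h12, h13, h23⟩ := Finset.two_lt_card.1 h3
  rcases hmem y₁ h₁ y₂ h₂ with rfl | rfl
  · exact h12 rfl
  rcases hmem y₁ h₁ y₃ h₃ with rfl | rfl
  · exact h13 rfl
  · exact h23 rfl

def ipPairHom (h : ℕ) :
    (Fin h → ZMod 2) × (Fin h → ZMod 2) →+ (Fin h → ZMod 2) × (Fin h → ZMod 2) →+ ZMod 2 :=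
  AddMonoidHom.mk'
    (fun x => AddMonoidHom.mk' (ipPair x) fun v w => by
      simp only [ipPair, Prod.fst_add, Prod.snd_add, Pi.add_apply, mul_add, Finset.sum_add_distrib]
      ring)
    fun x x' => by
      ext v
      simp only [AddMonoidHom.mk'_apply, AddMonoidHom.add_apply, ipPair, Prod.fst_add,
        Prod.snd_add, Pi.add_apply, add_mul, Finset.sum_add_distrib]
      ring

lemma exists_ipPair_ne_zero {h : ℕ} {z : (Fin h → ZMod 2) × (Fin h → ZMod 2)} (hz : z ≠ 0) :
    ∃ v, ipPair z v ≠ 0 := by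
  obtain ⟨i, hi⟩ | ⟨i, hi⟩ : (∃ i, z.1 i ≠ 0) ∨ ∃ i, z.2 i ≠ 0 := by
    by_contra! h0
    exact hz (Prod.ext (funext h0.1) (funext h0.2))
  · exact ⟨(Pi.single i 1, 0), by simpa [ipPair, Pi.single_apply] using hi⟩
  · exact ⟨(0, Pi.single i 1), by simpa [ipPair, Pi.single_apply] using hi⟩

lemma error_bound_le_two_rpow {δ : ℝ} {h : ℕ} (hh : 1 ≤ h) (hδh : 4 ≤ δ * h) :
    (2 : ℝ) ^ (-(δ * h)) / 2 + 2 ^ h * 2 ^ h * 2 ^ (-((1 / 2 + δ) * (2 * h))) /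
        (2 ^ (h - 1) * 2 ^ (-(δ * h))) ≤ 2 ^ (-(1 / 4 * δ * (2 * h))) := by
  set X : ℝ := 2 ^ (-(δ * h))
  have hX : 0 < X := by positivity
  have hX2 : (2 : ℝ) ^ (-((1 / 2 + δ) * (2 * h))) = ((2 : ℝ) ^ h)⁻¹ * X * X := by
    rw [show -((1 / 2 + δ) * (2 * (h : ℝ))) = -h + -(δ * h) + -(δ * h) by ring,
      Real.rpow_add two_pos, Real.rpow_add two_pos, Real.rpow_neg zero_le_two, Real.rpow_natCast]
  have hpow : (2 : ℝ) ^ (h - 1) = 2 ^ h / 2 := by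
    rw [eq_div_iff two_ne_zero, pow_sub_one_mul (by omega)]
  have h4X : 4 * X = 2 ^ (2 - δ * h) := by
    rw [sub_eq_add_neg, Real.rpow_add two_pos]
    norm_num [X]
  calc _ = 5 / 2 * X := by
        rw [hX2, hpow]
        field_simp
        ring
    _ ≤ 4 * X := by linarith
    _ ≤ _ := by
        rw [h4X]
        exact Real.rpow_le_rpow_of_exponent_le one_le_two (by linarith)

/-- Here the even number `n` is written as `2*h`, `{0,1}^n` is represented
as `F_2^h × F_2^h`, `K` plays the role of `GF(2^{n/2}) = GF(2^h)` (any field of that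
cardinality), `e` is the fixed `F_2`-linear identification of `K` with `F_2^{n/2}`, and
`Enc(y) = (ι(y), ι(y)³)`. -/
theorem stmt_11 :
    ∃ c : ℝ, 0 < c ∧
      ∀ δ : ℝ, 0 < δ → δ < 1/2 →
        ∃ N : ℕ, ∀ h : ℕ, N ≤ 2 * h →
          ∀ (K : Type) [Field K] [Fintype K], Fintype.card K = 2 ^ h →
            ∀ ι : BS (h - 1) → K, Function.Injective ι → (∀ y, ι y ≠ 0) →
              ∀ e : K ≃+ (Fin h → ZMod 2),
                IsNME (fun (x : (Fin h → ZMod 2) × (Fin h → ZMod 2)) (y : BS (h - 1)) =>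
                    ipPair x (e (ι y), e (ι y ^ 3)))
                  ((1/2 + δ) * (2 * h)) ((2:ℝ) ^ (-(c * δ * (2 * h)))) := by
  refine ⟨1 / 4, by norm_num, fun δ hδ _ => ⟨⌈8 / δ⌉₊, fun h hN K _ _ hK ι hι _ e => ?_⟩⟩
  have hδh : 4 ≤ δ * h := by
    have h8 := Nat.ceil_le.1 hN
    rw [div_le_iff₀ hδ] at h8
    push_cast at h8
    linarith
  have hh : 1 ≤ h := Nat.one_le_iff_ne_zero.2 fun h0 => by norm_num [h0] at hδh
  have : CharP K 2 := charP_of_card_eq_prime_pow hK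
  refine (isNME_pairing_of_card_fiber_le_two (B := ipPairHom h)
    (fun _ hz => exists_ipPair_ne_zero hz) (Enc := fun y => cubeEnc e.toAddMonoidHom (ι y))
    (fun y y' hyy => hι (e.injective (congrArg Prod.fst hyy)))
    (fun A hA => card_filter_cubeEnc_add_le_two e.injective hι hA) ((1 / 2 + δ) * (2 * h))
    (t := 2 ^ (-(δ * h))) (by positivity)).mono ?_
  simp only [Fintype.card_prod, Fintype.card_fun, ZMod.card, Fintype.card_fin, Fintype.card_bool]
  push_cast
  exact error_bound_le_two_rpow hh hδh
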